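/- arXiv:2003.10636 — 7 statements merged into one kernel-verified Lean document; each statement's English description precedes it below -/
import Mathlib

section
/- There exists a collection of N = 2^(n^(1/4)) subsets of [n], each of size √n, such that any two distinct sets in the collection intersect in at most n^(1/4) elements (for all sufficiently large n for which √n and n^(1/4) are integers). -/
/-!
Identify `[n]` with `[s] × [s]` and use graphs of functions `[s] → [s]`: two graphs meet in
exactly the points where the functions agree. Take a maximal family of functions pairwise agreeing
in at most `q` points. Every function then agrees with some member in at least `q + 1` points, and
at most `C(s, q + 1) s^(s - q - 1)` functions agree that often with a given one, so the family has
at least `s^(q + 1) / C(s, q + 1) ≥ (q + 1)! ≥ 2^q` members (the counting form of the union bound).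
-/

open Finset Fintype
open scoped Nat

section Agreement

variable {α β : Type*} [Fintype α] [DecidableEq α] [Fintype β] [DecidableEq β]

theorem card_filter_forall_mem_eq (f : α → β) (T : Finset α) :
    #{g : α → β | ∀ a ∈ T, g a = f a} = card β ^ (card α - #T) := by
  have hpi : ({g : α → β | ∀ a ∈ T, g a = f a} : Finset (α → β)) =
      piFinset fun a => if a ∈ T then {f a} else univ := by
    ext g
    simp only [mem_filter, mem_univ, true_and, mem_piFinset]
    refine ⟨fun h a => ?_, fun h a ha => by simpa [ha] using h a⟩
    split_ifs with ha <;> simp [h a, ha]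
  rw [hpi, card_piFinset]
  simp only [apply_ite Finset.card, card_singleton, card_univ]
  rw [Finset.prod_ite, prod_const_one, prod_const, filter_not, filter_mem_eq_inter, univ_inter,
    card_sdiff_of_subset (subset_univ T), card_univ, one_mul]

theorem card_filter_le_card_filter_eq_le (f : α → β) (r : ℕ) :
    #{g : α → β | r ≤ #{a | g a = f a}} ≤ (card α).choose r * card β ^ (card α - r) := by
  calc #{g : α → β | r ≤ #{a | g a = f a}}
      ≤ #((powersetCard r univ).biUnion fun T => {g : α → β | ∀ a ∈ T, g a = f a}) := by
        refine card_le_card fun g hg => ?_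
        obtain ⟨T, hT, hTr⟩ := exists_subset_card_eq (mem_filter.1 hg).2
        exact mem_biUnion.2 ⟨T, mem_powersetCard.2 ⟨subset_univ T, hTr⟩,
          mem_filter.2 ⟨mem_univ g, fun a ha => (mem_filter.1 (hT ha)).2⟩⟩
    _ ≤ ∑ T ∈ powersetCard r univ, #{g : α → β | ∀ a ∈ T, g a = f a} := card_biUnion_le
    _ = (card α).choose r * card β ^ (card α - r) := by
        rw [Finset.sum_congr rfl fun T hT => by
            rw [card_filter_forall_mem_eq, (mem_powersetCard.1 hT).2],
          sum_const, card_powersetCard, card_univ, smul_eq_mul]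

theorem exists_pairwise_card_filter_eq_lt (r : ℕ) (hr : r ≤ card α) :
    ∃ 𝒜 : Finset (α → β), (𝒜 : Set (α → β)).Pairwise (fun f g => #{a | f a = g a} < r) ∧
      card β ^ card α ≤ #𝒜 * ((card α).choose r * card β ^ (card α - r)) := by
  obtain ⟨𝒜, -, h𝒜⟩ := (Set.toFinite {𝒜 : Finset (α → β) |
    (𝒜 : Set (α → β)).Pairwise (fun f g => #{a | f a = g a} < r)}).exists_le_maximal
    (a := ∅) (by simp)
  refine ⟨𝒜, h𝒜.prop, ?_⟩
  have hcover : ∀ g : α → β, ∃ f ∈ 𝒜, r ≤ #{a | g a = f a} := by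
    intro g
    by_contra! hfar
    have hg : g ∈ 𝒜 := by
      refine insert_subset_iff.1 (h𝒜.2 ?_ (subset_insert g 𝒜)) |>.1
      show Set.Pairwise _ _
      rw [coe_insert, Set.pairwise_insert]
      exact ⟨h𝒜.prop, fun f hf _ => ⟨hfar f hf, by simpa only [eq_comm] using hfar f hf⟩⟩
    simpa using (hfar g hg).trans_le hr
  calc card β ^ card α = #(univ : Finset (α → β)) := by simp
    _ ≤ #(𝒜.biUnion fun f => {g : α → β | r ≤ #{a | g a = f a}}) :=
        card_le_card fun g _ => by simpa using hcover g
    _ ≤ ∑ f ∈ 𝒜, #{g : α → β | r ≤ #{a | g a = f a}} := card_biUnion_le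
    _ ≤ #𝒜 * ((card α).choose r * card β ^ (card α - r)) :=
        sum_le_card_nsmul _ _ _ fun f _ => card_filter_le_card_filter_eq_le f r

theorem exists_pairwise_card_filter_eq_lt_factorial_le (r : ℕ) (hr : r ≤ card α)
    (hαβ : card α ≤ card β) :
    ∃ 𝒜 : Finset (α → β), (𝒜 : Set (α → β)).Pairwise (fun f g => #{a | f a = g a} < r) ∧
      r ! ≤ #𝒜 := by
  obtain ⟨𝒜, h𝒜, hcount⟩ := exists_pairwise_card_filter_eq_lt (β := β) r hr
  have hpos : 0 < card β ^ card α := by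
    rcases (card α).eq_zero_or_pos with h | h
    · simp [h]
    · exact pow_pos (h.trans_le hαβ) _
  refine ⟨𝒜, h𝒜, Nat.le_of_mul_le_mul_left ?_ hpos⟩
  calc card β ^ card α * r ! ≤ #𝒜 * ((card α).choose r * card β ^ (card α - r)) * r ! :=
        Nat.mul_le_mul_right _ hcount
    _ = #𝒜 * (card α).descFactorial r * card β ^ (card α - r) := by
        rw [Nat.descFactorial_eq_factorial_mul_choose]; ring
    _ ≤ #𝒜 * card β ^ r * card β ^ (card α - r) := by
        gcongr; exact (Nat.descFactorial_le_pow _ _).trans (Nat.pow_le_pow_left hαβ r)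
    _ = card β ^ card α * #𝒜 := by rw [mul_assoc, ← pow_add, Nat.add_sub_cancel' hr, mul_comm]

end Agreement

section Graph

variable {α β : Type*} [Fintype α] [DecidableEq α] [DecidableEq β]

def graphFinset (f : α → β) : Finset (α × β) := univ.image fun a => (a, f a)

theorem mem_graphFinset {f : α → β} {x : α × β} : x ∈ graphFinset f ↔ x.2 = f x.1 := by
  simp only [graphFinset, mem_image, mem_univ, true_and]
  exact ⟨by rintro ⟨a, rfl⟩; rfl, fun h => ⟨x.1, by rw [← h]⟩⟩

theorem card_graphFinset (f : α → β) : #(graphFinset f) = card α :=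
  card_image_of_injective _ fun _ _ h => (Prod.mk.inj h).1

theorem graphFinset_inter_graphFinset (f g : α → β) :
    graphFinset f ∩ graphFinset g = ({a | f a = g a} : Finset α).image fun a => (a, f a) := by
  ext ⟨a, b⟩
  simp only [mem_inter, mem_graphFinset, mem_image, mem_filter, mem_univ, true_and, Prod.mk.injEq]
  constructor
  · rintro ⟨rfl, h⟩; exact ⟨a, h, rfl, rfl⟩
  · rintro ⟨a, h, rfl, rfl⟩; exact ⟨rfl, h⟩

theorem card_graphFinset_inter_graphFinset (f g : α → β) :
    #(graphFinset f ∩ graphFinset g) = #{a | f a = g a} := by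
  rw [graphFinset_inter_graphFinset,
    Finset.card_image_of_injective _ fun _ _ h => (Prod.mk.inj h).1]

theorem graphFinset_injective : Function.Injective (graphFinset : (α → β) → Finset (α × β)) := by
  intro f g h
  funext a
  exact (mem_graphFinset.1 (h ▸ mem_graphFinset.2 rfl : (a, f a) ∈ graphFinset g))

end Graph

/-- For all sufficiently large `n` for which `√n` and `n^(1/4)` are integers, there exists a
collection of `2^(n^(1/4))` subsets of `[n]`, each of size `√n`, such that any two distinct
sets in the collection intersect in at most `n^(1/4)` elements. -/
theorem stmt_0 :
    ∃ n₀ : ℕ, ∀ n : ℕ, n₀ ≤ n → ∀ s q : ℕ, s * s = n → q * q = s →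
      ∃ 𝒮 : Finset (Finset (Fin n)),
        𝒮.card = 2 ^ q ∧
        (∀ S ∈ 𝒮, S.card = s) ∧
        (∀ S ∈ 𝒮, ∀ T ∈ 𝒮, S ≠ T → (S ∩ T).card ≤ q) := by
  refine ⟨2, fun n hn s q hs hq => ?_⟩
  subst hs hq
  have hq : q + 1 ≤ q * q := by
    obtain _ | _ | q := q
    · simp at hn
    · simp at hn
    · nlinarith
  obtain ⟨𝒜, h𝒜, h𝒜card⟩ := exists_pairwise_card_filter_eq_lt_factorial_le
    (α := Fin (q * q)) (β := Fin (q * q)) (q + 1) (by simpa using hq) le_rfl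
  have hfact : 2 ^ q ≤ (q + 1)! := by
    simpa [add_comm] using Nat.factorial_mul_pow_le_factorial (m := 1) (n := q)
  obtain ⟨ℬ, hℬ𝒜, hℬ⟩ := exists_subset_card_eq (hfact.trans h𝒜card)
  let embed : (Fin (q * q) → Fin (q * q)) → Finset (Fin (q * q * (q * q))) :=
    fun f => (graphFinset f).map finProdFinEquiv.toEmbedding
  have hembed : Function.Injective embed := (map_injective _).comp graphFinset_injective
  refine ⟨ℬ.image embed, ?_, ?_, ?_⟩
  · rw [Finset.card_image_of_injective _ hembed, hℬ]
  · simp [embed, card_graphFinset]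
  · simp only [mem_image]
    rintro _ ⟨f, hf, rfl⟩ _ ⟨g, hg, rfl⟩ hfg
    rw [← map_inter, card_map, card_graphFinset_inter_graphFinset, ← Nat.lt_succ_iff]
    exact h𝒜 (hℬ𝒜 hf) (hℬ𝒜 hg) fun h => hfg (h ▸ rfl)
end

section
/- If S is a fixed √n-subset of [n] and S' is a uniformly random √n-subset of [n], then the probability that |S ∩ S'| > n^(1/4) is less than 1/(n^(1/4))!. -/
/-!
Every `r`-set `S'` meeting `S` in at least `k` points contains one of the `C(|S|, k)` `k`-subsets
of `S`, so there are at most `C(|S|, k) C(n - k, r - k)` of them. Since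
`C(n, r) C(r, k) = C(n, k) C(n - k, r - k)`, the probability is at most `C(|S|, k) C(r, k) / C(n, k)`,
and `(s)ₖ (r)ₖ ≤ (s r)ₖ` for descending factorials bounds this by `1 / k!` whenever `|S| r ≤ n`.
With `|S| = r = √n` and `k = n^(1/4) + 1` this gives `1 / (n^(1/4) + 1)! < 1 / (n^(1/4))!`.
-/

open Finset Nat

theorem Nat.descFactorial_mul_descFactorial_le_descFactorial_mul (s t k : ℕ) :
    s.descFactorial k * t.descFactorial k ≤ (s * t).descFactorial k := by
  induction k with
  | zero => simp
  | succ k ih =>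
    have step : (s - k) * (t - k) ≤ s * t - k := by
      rcases le_or_gt s k with hs | hs
      · simp [Nat.sub_eq_zero_of_le hs]
      rcases le_or_gt t k with ht | ht
      · simp [Nat.sub_eq_zero_of_le ht]
      obtain ⟨a, rfl⟩ := Nat.exists_eq_add_of_lt hs
      obtain ⟨b, rfl⟩ := Nat.exists_eq_add_of_lt ht
      rw [show k + a + 1 - k = a + 1 by omega, show k + b + 1 - k = b + 1 by omega]
      exact Nat.le_sub_of_add_le (by nlinarith)
    calc s.descFactorial (k + 1) * t.descFactorial (k + 1)
        = (s - k) * (t - k) * (s.descFactorial k * t.descFactorial k) := by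
          simp only [descFactorial_succ]; ring
      _ ≤ (s * t - k) * (s * t).descFactorial k := Nat.mul_le_mul step ih
      _ = (s * t).descFactorial (k + 1) := (descFactorial_succ _ _).symm

theorem Nat.choose_mul_choose_mul_factorial_le_choose_mul (s t k : ℕ) :
    s.choose k * t.choose k * k ! ≤ (s * t).choose k := by
  refine Nat.le_of_mul_le_mul_left ?_ (factorial_pos k)
  calc k ! * (s.choose k * t.choose k * k !)
      = s.descFactorial k * t.descFactorial k := by
        simp only [descFactorial_eq_factorial_mul_choose]; ring
    _ ≤ (s * t).descFactorial k := descFactorial_mul_descFactorial_le_descFactorial_mul s t k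
    _ = k ! * (s * t).choose k := descFactorial_eq_factorial_mul_choose _ _

section LargeIntersection

variable {α : Type*} [Fintype α] [DecidableEq α]

theorem Finset.card_filter_le_card_inter_le_choose_mul_choose (S : Finset α) {r k : ℕ}
    (hk : k ≤ r) :
    #{S' ∈ powersetCard r univ | k ≤ #(S ∩ S')} ≤
      (#S).choose k * (Fintype.card α - k).choose (r - k) := by
  have hcover : {S' ∈ powersetCard r (univ : Finset α) | k ≤ #(S ∩ S')} ⊆
      (S.powersetCard k).biUnion fun T ↦ {S' ∈ powersetCard r univ | T ⊆ S'} := by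
    intro S' hS'
    rw [mem_filter] at hS'
    obtain ⟨T, hT, hTcard⟩ := exists_subset_card_eq hS'.2
    exact mem_biUnion.2 ⟨T, mem_powersetCard.2 ⟨hT.trans inter_subset_left, hTcard⟩,
      mem_filter.2 ⟨hS'.1, hT.trans inter_subset_right⟩⟩
  calc _ ≤ _ := card_le_card hcover
    _ ≤ ∑ T ∈ S.powersetCard k, #{S' ∈ powersetCard r univ | T ⊆ S'} := card_biUnion_le
    _ = ∑ _T ∈ S.powersetCard k, (Fintype.card α - k).choose (r - k) := by
      refine sum_congr rfl fun T hT ↦ ?_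
      obtain ⟨-, hTcard⟩ := mem_powersetCard.1 hT
      rw [card_filter_powersetCard_subset T univ r (subset_univ T) (hTcard ▸ hk), card_univ,
        hTcard]
    _ = _ := by rw [sum_const, card_powersetCard, smul_eq_mul]

theorem Finset.card_filter_le_card_inter_mul_factorial_le_choose (S : Finset α) {r k : ℕ}
    (hk : k ≤ r) (hcard : #S * r ≤ Fintype.card α) :
    #{S' ∈ powersetCard r univ | k ≤ #(S ∩ S')} * k ! ≤ (Fintype.card α).choose r := by
  set n := Fintype.card α
  refine Nat.le_of_mul_le_mul_right ?_ (choose_pos hk)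
  calc #{S' ∈ powersetCard r univ | k ≤ #(S ∩ S')} * k ! * r.choose k
      ≤ (#S).choose k * (n - k).choose (r - k) * k ! * r.choose k := by
        gcongr; exact card_filter_le_card_inter_le_choose_mul_choose S hk
    _ = (#S).choose k * r.choose k * k ! * (n - k).choose (r - k) := by ring
    _ ≤ (#S * r).choose k * (n - k).choose (r - k) := by
        gcongr; exact choose_mul_choose_mul_factorial_le_choose_mul _ _ _
    _ ≤ n.choose k * (n - k).choose (r - k) := by gcongr
    _ = n.choose r * r.choose k := (choose_mul hk).symm

end LargeIntersection

/-- If `S` is a fixed `√n`-subset of `[n]` and `S'` a uniformly random `√n`-subset, then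
`Pr[|S ∩ S'| > n^(1/4)] < 1/(n^(1/4))!` for all sufficiently large `n` (with `√n`, `n^(1/4)`
integers). -/
theorem stmt_2 :
    ∃ n₀ : ℕ, ∀ n : ℕ, n₀ ≤ n → ∀ s q : ℕ, s * s = n → q * q = s →
      ∀ S : Finset (Fin n), S.card = s →
        (((Finset.powersetCard s (Finset.univ : Finset (Fin n))).filter
            (fun S' => q < (S ∩ S').card)).card : ℝ) / (n.choose s : ℝ) <
          1 / (Nat.factorial q : ℝ) := by
  refine ⟨2, fun n hn s q hs hq S hS ↦ ?_⟩
  have hq2 : 2 ≤ q := by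
    by_contra! h
    interval_cases q <;> subst hq <;> simp at hs <;> omega
  set N := #{S' ∈ powersetCard s univ | q < #(S ∩ S')}
  have hbound : N * (q + 1)! ≤ n.choose s := by
    simpa using card_filter_le_card_inter_mul_factorial_le_choose S (k := q + 1) (r := s)
      (by nlinarith) (by simp [hS, hs])
  have hpos : 0 < n.choose s := choose_pos (by nlinarith)
  have hlt : N * q ! < n.choose s := by
    rw [factorial_succ] at hbound
    nlinarith [Nat.zero_le (N * q !)]
  rw [div_lt_div_iff₀ (by positivity) (by positivity), one_mul]
  exact_mod_cast hlt
end

section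
/- Let c = (1+δ)/δ for δ ∈ (0,1) and ε > 0 with εn > 1. Consider n items with item pricing p_i = c^i, and n buyer types where type k (for k = 1,...,n) occurs with probability c^(−k) and has unit-demand values v_k^(k) = ((1+ε)/ε)·c^k for item k and v_j^(k) = (1/ε)·c^k for items j ≠ k. Then each buyer of type k purchases item k under this item pricing, and the expected revenue equals n. -/
/-! Writing `(1+ε)/ε · c^k = (1/ε) c^k + c^k`, type `k` gets surplus exactly `(1/ε) c^k` from item `k`,
while any other item `j` yields `(1/ε) c^k - c^j`, strictly less because every price `c^j` is
positive. The revenue from type `k` is `c^(-k) · c^k = 1`, so summing over the `n` types gives `n`. -/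

lemma one_add_div_self_mul {ε : ℝ} (hε : ε ≠ 0) (x : ℝ) :
    (1 + ε) / ε * x = 1 / ε * x + x := by
  field_simp

lemma sum_inv_mul_self_of_ne_zero {ι : Type*} (s : Finset ι) {f : ι → ℝ} (hf : ∀ i ∈ s, f i ≠ 0) :
    ∑ i ∈ s, (f i)⁻¹ * f i = s.card := by
  rw [Finset.sum_congr rfl fun i hi => inv_mul_cancel₀ (hf i hi)]
  simp

theorem stmt_7_general (n : ℕ) (δ ε : ℝ) (hδ : δ ∈ Set.Ioo (0 : ℝ) 1) (hε : 0 < ε) :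
    let c : ℝ := (1 + δ) / δ
    let v : ℕ → ℕ → ℝ := fun k j =>
      if j = k then ((1 + ε) / ε) * c ^ k else (1 / ε) * c ^ k
    (∀ k ∈ Finset.Icc 1 n,
      c ^ k ≤ v k k ∧
      ∀ j ∈ Finset.Icc 1 n, j ≠ k → v k j - c ^ j < v k k - c ^ k) ∧
    ∑ k ∈ Finset.Icc 1 n, (c ^ k)⁻¹ * c ^ k = (n : ℝ) := by
  intro c v
  have hc : 0 < c := by have := hδ.1; positivity
  refine ⟨fun k _ => ⟨?affordable, fun j _ hjk => ?preferred⟩, ?revenue⟩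
  case affordable =>
    simp only [v, if_pos, one_add_div_self_mul hε.ne']
    have : 0 ≤ 1 / ε * c ^ k := by positivity
    linarith
  case preferred =>
    simp only [v, if_pos, if_neg hjk, one_add_div_self_mul hε.ne']
    have : 0 < c ^ j := by positivity
    linarith
  case revenue =>
    rw [sum_inv_mul_self_of_ne_zero _ fun k _ => (pow_pos hc k).ne', Nat.card_Icc]
    simp

/-- In the continuity lower-bound construction with `c = (1+δ)/δ`, item prices `p_i = c^i`,
and type `k` having value `((1+ε)/ε)c^k` for item `k` and `(1/ε)c^k` for items `j ≠ k`:
each type `k` purchases item `k` (item `k` is affordable and strictly utility-maximizing),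
and the expected revenue `Σ_k c^(-k)·c^k` equals `n`. -/
theorem stmt_7 (n : ℕ) (δ ε : ℝ) (hδ : δ ∈ Set.Ioo (0 : ℝ) 1) (hε : 0 < ε)
    (hεn : 1 < ε * n) :
    let c : ℝ := (1 + δ) / δ
    let v : ℕ → ℕ → ℝ := fun k j =>
      if j = k then ((1 + ε) / ε) * c ^ k else (1 / ε) * c ^ k
    (∀ k ∈ Finset.Icc 1 n,
      c ^ k ≤ v k k ∧
      ∀ j ∈ Finset.Icc 1 n, j ≠ k → v k j - c ^ j < v k k - c ^ k) ∧
    ∑ k ∈ Finset.Icc 1 n, (c ^ k)⁻¹ * c ^ k = (n : ℝ) :=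
  stmt_7_general n δ ε hδ hε
end

section
/- Let c = (1+δ)/δ for δ ∈ (0,1) and ε > 0. If a single-parameter buyer has value (1/ε)·c^k for every item (for all items simultaneously), with probability c^(−k) for each k = 1,...,n (and value 0 otherwise), then the optimal revenue from any posted bundle price is strictly less than (1+δ)/ε. -/
/-! If `m` is the smallest type `k` that buys at price `q`, then `q ≤ a c^m`, while the
probability of buying is at most the geometric tail `∑_{k ≥ m} c^{-k} = c^{-m} / (1 - c⁻¹)`,
with strict inequality because only finitely many types occur. Hence the revenue is below
`a / (1 - c⁻¹)`, which for `a = 1/ε` and `c = (1+δ)/δ` equals `(1+δ)/ε`. -/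

theorem sum_pow_lt_div_one_sub_of_forall_le {K : Type*} [Field K] [LinearOrder K]
    [IsStrictOrderedRing K] {r : K} (hr₀ : 0 < r) (hr₁ : r < 1) {m : ℕ} {s : Finset ℕ}
    (hs : ∀ k ∈ s, m ≤ k) : ∑ k ∈ s, r ^ k < r ^ m / (1 - r) := by
  set N := m + s.sup id + 1
  have hsN : s ⊆ Finset.Ico m N := fun k hk =>
    Finset.mem_Ico.2 ⟨hs k hk, Nat.lt_succ_of_le (le_add_left (Finset.le_sup (f := id) hk))⟩
  calc ∑ k ∈ s, r ^ k ≤ ∑ k ∈ Finset.Ico m N, r ^ k :=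
        Finset.sum_le_sum_of_subset_of_nonneg hsN fun _ _ _ => by positivity
    _ = (r ^ m - r ^ N) / (1 - r) := geom_sum_Ico' hr₁.ne (by omega)
    _ < r ^ m / (1 - r) := by
      gcongr
      exact sub_lt_self _ (by positivity)

theorem posted_price_revenue_lt {a c q : ℝ} (ha : 0 < a) (hc : 1 < c) (s : Finset ℕ) :
    q * ∑ k ∈ s.filter (fun k => q ≤ a * c ^ k), (c ^ k)⁻¹ < a / (1 - c⁻¹) := by
  have hc₀ : 0 < c := one_pos.trans hc
  have hbound : 0 < a / (1 - c⁻¹) := div_pos ha (sub_pos.2 (inv_lt_one_of_one_lt₀ hc))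
  set buyers := s.filter (fun k => q ≤ a * c ^ k)
  rcases buyers.eq_empty_or_nonempty with hempty | hne
  · simpa [hempty] using hbound
  set m := buyers.min' hne
  have hqm : q ≤ a * c ^ m := (Finset.mem_filter.1 (buyers.min'_mem hne)).2
  have htail : ∑ k ∈ buyers, (c ^ k)⁻¹ < (c ^ m)⁻¹ / (1 - c⁻¹) := by
    simp only [← inv_pow]
    exact sum_pow_lt_div_one_sub_of_forall_le (inv_pos.2 hc₀) (inv_lt_one_of_one_lt₀ hc)
      fun k hk => buyers.min'_le k hk
  calc q * ∑ k ∈ buyers, (c ^ k)⁻¹ ≤ a * c ^ m * ∑ k ∈ buyers, (c ^ k)⁻¹ :=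
        mul_le_mul_of_nonneg_right hqm (Finset.sum_nonneg fun _ _ => by positivity)
    _ < a * c ^ m * ((c ^ m)⁻¹ / (1 - c⁻¹)) := by gcongr
    _ = a / (1 - c⁻¹) := by field_simp

theorem stmt_8_general (n : ℕ) (δ ε q : ℝ) (hδ : δ ∈ Set.Ioo (0 : ℝ) 1) (hε : 0 < ε) :
    let c : ℝ := (1 + δ) / δ
    q * ∑ k ∈ (Finset.Icc 1 n).filter (fun k => q ≤ (1 / ε) * c ^ k), (c ^ k)⁻¹
      < (1 + δ) / ε := by
  intro c
  have hδ₀ : 0 < δ := hδ.1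
  have hc : 1 < c := (one_lt_div hδ₀).2 (by linarith)
  have hbound : 1 / ε / (1 - c⁻¹) = (1 + δ) / ε := by
    simp only [c, inv_div]
    field_simp
    ring
  simpa only [hbound] using posted_price_revenue_lt (one_div_pos.2 hε) hc (Finset.Icc 1 n)

/-- For a single-parameter buyer with value `(1/ε)c^k` for everything, with probability
`c^(-k)` for `k = 1, ..., n` (`c = (1+δ)/δ`), every posted bundle price `q > 0` earns
revenue `q · Pr[value ≥ q]` strictly less than `(1+δ)/ε`. -/
theorem stmt_8 (n : ℕ) (δ ε q : ℝ) (hδ : δ ∈ Set.Ioo (0 : ℝ) 1) (hε : 0 < ε)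
    (hq : 0 < q) :
    let c : ℝ := (1 + δ) / δ
    q * ∑ k ∈ (Finset.Icc 1 n).filter (fun k => q ≤ (1 / ε) * c ^ k), (c ^ k)⁻¹
      < (1 + δ) / ε :=
  stmt_8_general n δ ε q hδ hε
end

section
/- Combining the previous two constructions: for any ε > 0 with εn > 1 and any δ ∈ (0,1), there exists a unit-demand value distribution D over n items and a (1±ε)-multiplicative perturbation D' of D such that the optimal buy-many revenue on D is at least n, while the optimal (even unconstrained) revenue on D' equals (1+δ)/ε. -/
/-!
Sell every item `k` alone at price `c ^ k`. Type `k` of `D` values item `k` at exactly `c ^ k`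
above every other item, so buying item `k` leaves it the surplus `c ^ k / ε`, and no combination
of purchases does better, because each purchased item `j` costs at least `v j - c ^ k / ε`.
With type probabilities `c⁻¹ ^ k` (the tail beyond `n` lumped onto type `n`) every type
contributes at least `1` to the expected revenue.

In `D'` type `k` values every nonempty set at `c ^ k / ε`, so `D'` is single-parameter, and
`Pr[type ≥ j] · c ^ j / ε = (1 + δ) / ε` for all `j` (an equal-revenue distribution). Myerson's
argument bounds the revenue of every IC and IR mechanism by this constant, and posting the
lowest value attains it.
-/

/-- Value of a unit-demand buyer with item values `v` for a set `S` of items: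
`max_{i ∈ S} v i` (and `0` for the empty set). -/
noncomputable def setVal {n : ℕ} (v : Fin n → ℝ) (S : Finset (Fin n)) : ℝ :=
  ((S.image v).max).getD 0

/-- A lottery: a (sub)distribution over subsets of the `n` items together with a price. -/
abbrev Lottery (n : ℕ) := (Finset (Fin n) → ℝ) × ℝ

/-- `ℓ.1` is a probability distribution over subsets of items. -/
def IsLottery {n : ℕ} (ℓ : Lottery n) : Prop :=
  (∀ S, 0 ≤ ℓ.1 S) ∧ ∑ S : Finset (Fin n), ℓ.1 S = 1

/-- Expected value of a unit-demand buyer with values `v` who currently holds the set `A`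
and buys the list `L` of lotteries (independent draws, keeping the union). -/
noncomputable def evVal {n : ℕ} (v : Fin n → ℝ) : Finset (Fin n) → List (Lottery n) → ℝ
  | A, [] => setVal v A
  | A, ℓ :: L => ∑ S : Finset (Fin n), ℓ.1 S * evVal v (A ∪ S) L

/-- Total price of a list of purchased lotteries. -/
noncomputable def listPrice {n : ℕ} (L : List (Lottery n)) : ℝ := (L.map Prod.snd).sum

/-- Utility of a unit-demand buyer with values `v` buying the list `L` of lotteries. -/
noncomputable def listUtility {n : ℕ} (v : Fin n → ℝ) (L : List (Lottery n)) : ℝ :=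
  evVal v ∅ L - listPrice L

open Finset

section SetValue

variable {n : ℕ} {v w : Fin n → ℝ} {S : Finset (Fin n)}

@[simp]
lemma setVal_empty (v : Fin n → ℝ) : setVal v ∅ = 0 := rfl

lemma setVal_of_max_eq {a : ℝ} (h : (S.image v).max = a) : setVal v S = a := by
  rw [setVal, h]
  rfl

lemma exists_mem_setVal_eq (hS : S.Nonempty) : ∃ i ∈ S, setVal v S = v i := by
  obtain ⟨a, ha⟩ := Finset.max_of_nonempty (hS.image v)
  obtain ⟨i, hi, rfl⟩ := mem_image.mp (Finset.mem_of_max ha)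
  exact ⟨i, hi, setVal_of_max_eq ha⟩

lemma le_setVal {i : Fin n} (hi : i ∈ S) : v i ≤ setVal v S := by
  obtain ⟨a, ha⟩ := Finset.max_of_nonempty (Finset.Nonempty.image ⟨i, hi⟩ v)
  rw [setVal_of_max_eq ha]
  exact Finset.le_max_of_eq (mem_image_of_mem v hi) ha

lemma setVal_singleton (v : Fin n → ℝ) (i : Fin n) : setVal v {i} = v i := by
  obtain ⟨j, hj, h⟩ := exists_mem_setVal_eq (v := v) (singleton_nonempty i)
  rwa [mem_singleton.mp hj] at h

lemma setVal_union_singleton_le (A : Finset (Fin n)) (j : Fin n) :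
    setVal v (A ∪ {j}) ≤ max (setVal v A) (v j) := by
  obtain ⟨i, hi, h⟩ := exists_mem_setVal_eq (v := v)
    (A.union_nonempty.mpr (Or.inr (singleton_nonempty j)))
  rw [h]
  rcases mem_union.mp hi with hi | hi
  · exact le_max_of_le_left (le_setVal hi)
  · rw [mem_singleton.mp hi]
    exact le_max_right _ _

lemma setVal_const (a : ℝ) (S : Finset (Fin n)) :
    setVal (fun _ => a) S = if S = ∅ then 0 else a := by
  split_ifs with hS
  · rw [hS, setVal_empty]
  · obtain ⟨i, -, h⟩ := exists_mem_setVal_eq (v := fun _ => a) (nonempty_iff_ne_empty.mpr hS)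
    exact h

lemma setVal_perturb {ε : ℝ} (hε : 0 ≤ ε) (h : ∀ i, (1 - ε) * v i ≤ w i ∧ w i ≤ (1 + ε) * v i)
    (S : Finset (Fin n)) :
    (1 - ε) * setVal v S ≤ setVal w S ∧ setVal w S ≤ (1 + ε) * setVal v S := by
  rcases S.eq_empty_or_nonempty with rfl | hS
  · simp
  obtain ⟨i, hi, hvi⟩ := exists_mem_setVal_eq (v := v) hS
  obtain ⟨j, hj, hwj⟩ := exists_mem_setVal_eq (v := w) hS
  constructor
  · rw [hvi]
    exact (h i).1.trans (le_setVal hi)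
  · rw [hwj]
    exact (h j).2.trans (mul_le_mul_of_nonneg_left (le_setVal hj) (by linarith))

end SetValue

section ItemPricing

variable {n : ℕ}

def detLottery (T : Finset (Fin n)) (p : ℝ) : Lottery n := (fun S => if S = T then 1 else 0, p)

lemma isLottery_detLottery (T : Finset (Fin n)) (p : ℝ) : IsLottery (detLottery T p) :=
  ⟨fun S => by unfold detLottery; positivity, by simp [detLottery]⟩

lemma evVal_detLottery_cons (v : Fin n → ℝ) (A T : Finset (Fin n)) (p : ℝ)
    (L : List (Lottery n)) : evVal v A (detLottery T p :: L) = evVal v (A ∪ T) L := by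
  simp [evVal, detLottery, ite_mul]

lemma listPrice_cons (ℓ : Lottery n) (L : List (Lottery n)) :
    listPrice (ℓ :: L) = ℓ.2 + listPrice L := by
  simp [listPrice]

lemma listUtility_detLottery_singleton (v : Fin n → ℝ) (j : Fin n) (p : ℝ) :
    listUtility v [detLottery {j} p] = v j - p := by
  rw [listUtility, evVal_detLottery_cons, empty_union]
  simp [evVal, setVal_singleton, listPrice, detLottery]

def itemMenu (price : Fin n → ℝ) : Set (Lottery n) :=
  Set.range fun j => detLottery {j} (price j)

lemma evVal_le_listPrice_add_max {v price : Fin n → ℝ} {B : ℝ} (hprice : ∀ j, 0 ≤ price j)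
    (hv : ∀ j, v j ≤ price j + B) {L : List (Lottery n)} (hL : ∀ ℓ ∈ L, ℓ ∈ itemMenu price)
    (A : Finset (Fin n)) : evVal v A L ≤ listPrice L + max (setVal v A) B := by
  induction L generalizing A with
  | nil => simp [evVal, listPrice]
  | cons ℓ L ih =>
    obtain ⟨j, rfl⟩ := hL ℓ List.mem_cons_self
    have hstep : max (setVal v (A ∪ {j})) B ≤ price j + max (setVal v A) B := by
      have hA := le_max_left (setVal v A) B
      have hB := le_max_right (setVal v A) B
      refine max_le ((setVal_union_singleton_le A j).trans (max_le ?_ ?_)) ?_ <;>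
        linarith [hprice j, hv j]
    rw [evVal_detLottery_cons, listPrice_cons]
    calc evVal v (A ∪ {j}) L ≤ listPrice L + max (setVal v (A ∪ {j})) B :=
          ih (fun ℓ hℓ => hL ℓ (List.mem_cons_of_mem _ hℓ)) _
      _ ≤ (detLottery {j} (price j)).2 + listPrice L + max (setVal v A) B := by
          simp only [detLottery]; linarith

lemma listUtility_le_of_mem_itemMenu {v price : Fin n → ℝ} {B : ℝ} (hB : 0 ≤ B)
    (hprice : ∀ j, 0 ≤ price j) (hv : ∀ j, v j ≤ price j + B) {L : List (Lottery n)}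
    (hL : ∀ ℓ ∈ L, ℓ ∈ itemMenu price) : listUtility v L ≤ B := by
  have := evVal_le_listPrice_add_max hprice hv hL ∅
  rw [setVal_empty, max_eq_right hB] at this
  unfold listUtility
  linarith

end ItemPricing

section EqualRevenue

variable {n : ℕ} {prob w q p : ℕ → ℝ} {R : ℝ}

lemma sum_Icc_eq_add_sum_Icc_succ (f : ℕ → ℝ) {j : ℕ} (hj : j ≤ n) :
    ∑ k ∈ Icc j n, f k = f j + ∑ k ∈ Icc (j + 1) n, f k := by
  rw [Icc_add_one_left_eq_Ioc, add_sum_Ioc_eq_sum_Icc hj]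

/-- Myerson's argument: local IC charges each price increase `p (m + 1) - p m`, paid by all
types `≥ m + 1`, to the allocation increase `q (m + 1) - q m` at rate
`w (m + 1) * ∑ k ∈ Icc (m + 1) n, prob k = R`. -/
lemma sum_mul_add_tail_mul_le (hprob : ∀ k, 0 ≤ prob k)
    (htail : ∀ j ∈ Icc 1 n, w j * ∑ k ∈ Icc j n, prob k = R)
    (hIR : p 1 ≤ w 1 * q 1)
    (hIC : ∀ m ∈ Ico 1 n, p (m + 1) - p m ≤ w (m + 1) * (q (m + 1) - q m))
    {m : ℕ} (hm : 1 ≤ m) (hmn : m ≤ n) :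
    ∑ k ∈ Icc 1 m, prob k * p k + (∑ k ∈ Icc (m + 1) n, prob k) * p m ≤ R * q m := by
  have htail_nonneg : ∀ j, 0 ≤ ∑ k ∈ Icc j n, prob k := fun j => sum_nonneg fun k _ => hprob k
  induction m, hm using Nat.le_induction with
  | base =>
    rw [Icc_self, sum_singleton, ← add_mul, ← sum_Icc_eq_add_sum_Icc_succ prob hmn,
      ← htail 1 (mem_Icc.mpr ⟨le_rfl, hmn⟩), mul_comm (w 1), mul_assoc]
    exact mul_le_mul_of_nonneg_left hIR (htail_nonneg 1)
  | succ m hm ih =>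
    have hT := sum_Icc_eq_add_sum_Icc_succ prob hmn
    have hR := htail (m + 1) (mem_Icc.mpr ⟨by omega, hmn⟩)
    have hstep := mul_le_mul_of_nonneg_left (hIC m (mem_Ico.mpr ⟨hm, hmn⟩))
      (htail_nonneg (m + 1))
    have hcharge : (∑ k ∈ Icc (m + 1) n, prob k) * (w (m + 1) * (q (m + 1) - q m)) =
        R * (q (m + 1) - q m) := by
      rw [← hR]; ring
    have := ih (by omega)
    rw [sum_Icc_succ_top (by omega)]
    rw [hT] at this hstep hcharge
    linarith

lemma sum_mul_le_of_tail_mul_eq (hn : 1 ≤ n) (hprob : ∀ k, 0 ≤ prob k)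
    (htail : ∀ j ∈ Icc 1 n, w j * ∑ k ∈ Icc j n, prob k = R)
    (hIR : p 1 ≤ w 1 * q 1)
    (hIC : ∀ m ∈ Ico 1 n, p (m + 1) - p m ≤ w (m + 1) * (q (m + 1) - q m))
    (hq : q n ≤ 1) (hR : 0 ≤ R) :
    ∑ k ∈ Icc 1 n, prob k * p k ≤ R := by
  have := sum_mul_add_tail_mul_le hprob htail hIR hIC hn le_rfl
  rw [Icc_eq_empty_of_lt (lt_add_one n), sum_empty, zero_mul, add_zero] at this
  exact this.trans (mul_le_of_le_one_right hR hq)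

end EqualRevenue

noncomputable def optRevenue {n : ℕ} (vals : ℕ → Fin n → ℝ) (prob : ℕ → ℝ) : ℝ :=
  sSup {r : ℝ | ∃ (x : ℕ → Finset (Fin n) → ℝ) (p : ℕ → ℝ),
          (∀ k, IsLottery (x k, p k)) ∧
          (∀ k ∈ Icc 1 n, ∀ k' ∈ Icc 1 n,
            (∑ S : Finset (Fin n), x k' S * setVal (vals k) S) - p k' ≤
            (∑ S : Finset (Fin n), x k S * setVal (vals k) S) - p k) ∧
          (∀ k ∈ Icc 1 n,
            0 ≤ (∑ S : Finset (Fin n), x k S * setVal (vals k) S) - p k) ∧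
          r = ∑ k ∈ Icc 1 n, prob k * p k}

lemma sum_mul_setVal_const {n : ℕ} {x : Finset (Fin n) → ℝ} (hx : ∑ S, x S = 1) (a : ℝ) :
    ∑ S : Finset (Fin n), x S * setVal (fun _ => a) S = a * (1 - x ∅) := by
  calc ∑ S, x S * setVal (fun _ => a) S = ∑ S, (a * x S - if S = ∅ then a * x S else 0) := by
        refine sum_congr rfl fun S _ => ?_
        rw [setVal_const]
        split_ifs <;> ring
    _ = a * (1 - x ∅) := by
        rw [sum_sub_distrib, ← mul_sum, hx, sum_ite_eq']
        simp only [mem_univ, if_true]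
        ring

lemma optRevenue_const_eq_of_tail_mul_eq {n : ℕ} (hn : 1 ≤ n) {prob w : ℕ → ℝ} {R : ℝ}
    (hprob : ∀ k, 0 ≤ prob k) (htail : ∀ j ∈ Icc 1 n, w j * ∑ k ∈ Icc j n, prob k = R)
    (hw : ∀ k ∈ Icc 1 n, w 1 ≤ w k) (hR : 0 ≤ R) :
    optRevenue (fun k (_ : Fin n) => w k) prob = R := by
  have hval : ∀ k, ∑ S : Finset (Fin n), (detLottery univ (w 1)).1 S * setVal (fun _ => w k) S =
      w k := by
    intro k
    simp only [detLottery, ite_mul, one_mul, zero_mul, sum_ite_eq', mem_univ, if_true,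
      setVal_const]
    exact if_neg (univ_nonempty_iff.mpr ⟨⟨0, hn⟩⟩).ne_empty
  apply IsGreatest.csSup_eq
  refine ⟨⟨fun _ => (detLottery univ (w 1)).1, fun _ => w 1,
    fun _ => isLottery_detLottery _ _, fun k _ k' _ => le_rfl, fun k hk => ?_, ?_⟩, ?_⟩
  · rw [hval]; linarith [hw k hk]
  · rw [← sum_mul, mul_comm, htail 1 (mem_Icc.mpr ⟨le_rfl, hn⟩)]
  · rintro _ ⟨x, p, hlot, hIC, hIR, rfl⟩
    simp only [sum_mul_setVal_const (hlot _).2] at hIC hIR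
    refine sum_mul_le_of_tail_mul_eq hn hprob htail (q := fun k => 1 - x k ∅) ?_ ?_ ?_ hR
    · linarith [hIR 1 (mem_Icc.mpr ⟨le_rfl, hn⟩)]
    · intro m hm
      obtain ⟨hm1, hmn⟩ := mem_Ico.mp hm
      have := hIC (m + 1) (mem_Icc.mpr ⟨by omega, hmn⟩) m (mem_Icc.mpr ⟨hm1, hmn.le⟩)
      linarith
    · linarith [(hlot n).1 ∅]

def BuyManyRevenueAtLeast {n : ℕ} (vals : ℕ → Fin n → ℝ) (prob : ℕ → ℝ) (R : ℝ) : Prop :=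
  ∃ (M : Set (Lottery n)) (σ : ℕ → List (Lottery n)),
    (∀ ℓ ∈ M, IsLottery ℓ) ∧
    (∀ k ∈ Icc 1 n, ∀ ℓ ∈ σ k, ℓ ∈ M) ∧
    (∀ k ∈ Icc 1 n, ∀ L : List (Lottery n), (∀ ℓ ∈ L, ℓ ∈ M) →
      listUtility (vals k) L ≤ listUtility (vals k) (σ k)) ∧
    (∀ k ∈ Icc 1 n, 0 ≤ listUtility (vals k) (σ k)) ∧
    R ≤ ∑ k ∈ Icc 1 n, prob k * listPrice (σ k)

section Construction

/-- The geometric distribution `k ↦ r ^ k` whose mass beyond `n` is moved onto `n`. -/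
noncomputable def truncGeom (r : ℝ) (n k : ℕ) : ℝ := if k = n then r ^ n / (1 - r) else r ^ k

variable {r : ℝ} {n : ℕ}

lemma truncGeom_nonneg (hr0 : 0 ≤ r) (hr1 : r < 1) (k : ℕ) : 0 ≤ truncGeom r n k := by
  unfold truncGeom
  split_ifs
  · exact div_nonneg (pow_nonneg hr0 n) (by linarith)
  · exact pow_nonneg hr0 k

lemma sum_Icc_truncGeom (hr : r ≠ 1) {j : ℕ} (hj : j ≤ n) :
    ∑ k ∈ Icc j n, truncGeom r n k = r ^ j / (1 - r) := by
  have hr' : 1 - r ≠ 0 := sub_ne_zero.mpr hr.symm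
  rw [← Ico_add_one_right_eq_Icc, sum_Ico_succ_top (by omega), truncGeom, if_pos rfl,
    sum_congr rfl fun k hk => show truncGeom r n k = r ^ k from if_neg (mem_Ico.mp hk).2.ne,
    geom_sum_Ico' hr hj]
  field_simp
  ring

lemma one_le_truncGeom_inv_mul_pow {c : ℝ} (hc : 1 < c) (k : ℕ) :
    1 ≤ truncGeom c⁻¹ n k * c ^ k := by
  have hc0 : c ≠ 0 := by positivity
  have hinv : c⁻¹ ^ k * c ^ k = 1 := by rw [← mul_pow, inv_mul_cancel₀ hc0, one_pow]
  unfold truncGeom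
  split_ifs with hk
  · subst hk
    rw [div_mul_eq_mul_div, hinv, one_le_div (by linarith [inv_lt_one_of_one_lt₀ hc])]
    linarith [inv_pos.mpr (zero_lt_one.trans hc)]
  · rw [hinv]

/-- Item `i : Fin n` is the paper's item `i + 1`. -/
noncomputable def typeVal (ε c : ℝ) (k : ℕ) (i : Fin n) : ℝ :=
  if (i : ℕ) + 1 = k then (1 + ε) / ε * c ^ k else c ^ k / ε

variable {ε c : ℝ}

lemma typeVal_perturb (hε : 0 < ε) (hc : 0 ≤ c) (k : ℕ) (i : Fin n) :
    (1 - ε) * typeVal ε c k i ≤ c ^ k / ε ∧ c ^ k / ε ≤ (1 + ε) * typeVal ε c k i := by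
  have hck : 0 ≤ c ^ k / ε := by positivity
  have hεε : 0 ≤ ε * ε * (c ^ k / ε) := by positivity
  unfold typeVal
  split_ifs
  · rw [show (1 + ε) / ε * c ^ k = (1 + ε) * (c ^ k / ε) by ring]
    constructor <;> nlinarith
  · constructor <;> nlinarith

lemma typeVal_le_add (hε : 0 < ε) (hc : 0 ≤ c) (k : ℕ) (i : Fin n) :
    typeVal ε c k i ≤ c ^ ((i : ℕ) + 1) + c ^ k / ε := by
  unfold typeVal
  split_ifs with hi
  · rw [hi, show (1 + ε) / ε * c ^ k = c ^ k + c ^ k / ε by field_simp; ring]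
  · linarith [pow_nonneg hc ((i : ℕ) + 1)]

lemma buyManyRevenueAtLeast_typeVal (hn : 1 ≤ n) (hε : 0 < ε) (hc : 0 ≤ c) {prob : ℕ → ℝ}
    (hprob : ∀ k ∈ Icc 1 n, 1 ≤ prob k * c ^ k) :
    BuyManyRevenueAtLeast (typeVal (n := n) ε c) prob n := by
  let item (k : ℕ) : Fin n := ⟨(k - 1) % n, Nat.mod_lt _ hn⟩
  have hitem : ∀ k ∈ Icc 1 n, (item k : ℕ) + 1 = k := by
    intro k hk
    obtain ⟨hk1, hkn⟩ := mem_Icc.mp hk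
    simp only [item, Nat.mod_eq_of_lt (show k - 1 < n by omega)]
    omega
  have hutil : ∀ k ∈ Icc 1 n,
      listUtility (typeVal ε c k) [detLottery {item k} (c ^ k)] = c ^ k / ε := by
    intro k hk
    rw [listUtility_detLottery_singleton, typeVal, if_pos (hitem k hk)]
    field_simp
    ring
  refine ⟨itemMenu fun i => c ^ ((i : ℕ) + 1), fun k => [detLottery {item k} (c ^ k)],
    ?_, ?_, ?_, ?_, ?_⟩
  · rintro _ ⟨i, rfl⟩
    exact isLottery_detLottery _ _
  · intro k hk ℓ hℓ
    rw [List.mem_singleton.mp hℓ]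
    exact ⟨item k, show detLottery _ (c ^ ((item k : ℕ) + 1)) = _ by rw [hitem k hk]⟩
  · intro k hk L hL
    rw [hutil k hk]
    exact listUtility_le_of_mem_itemMenu (by positivity) (fun i => by positivity)
      (typeVal_le_add hε hc k) hL
  · intro k hk
    rw [hutil k hk]
    positivity
  · calc (n : ℝ) = ∑ _k ∈ Icc 1 n, (1 : ℝ) := by simp
      _ ≤ ∑ k ∈ Icc 1 n, prob k * listPrice [detLottery {item k} (c ^ k)] := by
        refine sum_le_sum fun k hk => ?_
        simpa [listPrice, detLottery] using hprob k hk

end Construction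

theorem stmt_9_general (n : ℕ) (hn : 1 ≤ n) (ε δ : ℝ) (hδ : δ ∈ Set.Ioo (0 : ℝ) 1)
    (hε : 0 < ε) :
    ∃ (vals vals' : ℕ → Fin n → ℝ) (prob : ℕ → ℝ),
      (∀ k, 0 ≤ prob k) ∧ (∑ k ∈ Finset.Icc 1 n, prob k ≤ 1) ∧
      -- D' is a (1±ε)-multiplicative perturbation of D (under the identity coupling)
      (∀ k ∈ Finset.Icc 1 n, ∀ S : Finset (Fin n),
        (1 - ε) * setVal (vals k) S ≤ setVal (vals' k) S ∧
        setVal (vals' k) S ≤ (1 + ε) * setVal (vals k) S) ∧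
      -- the optimal buy-many revenue for D is at least n
      (∃ (M : Set (Lottery n)) (σ : ℕ → List (Lottery n)),
        (∀ ℓ ∈ M, IsLottery ℓ) ∧
        (∀ k ∈ Finset.Icc 1 n, ∀ ℓ ∈ σ k, ℓ ∈ M) ∧
        (∀ k ∈ Finset.Icc 1 n, ∀ L : List (Lottery n), (∀ ℓ ∈ L, ℓ ∈ M) →
          listUtility (vals k) L ≤ listUtility (vals k) (σ k)) ∧
        (∀ k ∈ Finset.Icc 1 n, 0 ≤ listUtility (vals k) (σ k)) ∧
        (n : ℝ) ≤ ∑ k ∈ Finset.Icc 1 n, prob k * listPrice (σ k)) ∧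
      -- the optimal (unconstrained, IC-IR) revenue for D' equals (1+δ)/ε
      sSup {r : ℝ | ∃ (x : ℕ → Finset (Fin n) → ℝ) (p : ℕ → ℝ),
          (∀ k, IsLottery (x k, p k)) ∧
          (∀ k ∈ Finset.Icc 1 n, ∀ k' ∈ Finset.Icc 1 n,
            (∑ S : Finset (Fin n), x k' S * setVal (vals' k) S) - p k' ≤
            (∑ S : Finset (Fin n), x k S * setVal (vals' k) S) - p k) ∧
          (∀ k ∈ Finset.Icc 1 n,
            0 ≤ (∑ S : Finset (Fin n), x k S * setVal (vals' k) S) - p k) ∧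
          r = ∑ k ∈ Finset.Icc 1 n, prob k * p k}
        = (1 + δ) / ε := by
  obtain ⟨hδ0, hδ1⟩ := hδ
  set c := (1 + δ) / δ with hc_def
  have hc : 1 < c := by rw [hc_def, lt_div_iff₀ hδ0]; linarith
  have hc0 : 0 < c := zero_lt_one.trans hc
  have hc_inv : c⁻¹ < 1 := inv_lt_one_of_one_lt₀ hc
  have hgeom : 1 - c⁻¹ = (1 + δ)⁻¹ := by rw [hc_def, inv_div]; field_simp; ring
  have htail : ∀ j ∈ Icc 1 n, c ^ j / ε * ∑ k ∈ Icc j n, truncGeom c⁻¹ n k = (1 + δ) / ε := by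
    intro j hj
    rw [sum_Icc_truncGeom hc_inv.ne (mem_Icc.mp hj).2, hgeom, inv_pow]
    field_simp
  refine ⟨typeVal ε c, fun k _ => c ^ k / ε, truncGeom c⁻¹ n,
    truncGeom_nonneg (by positivity) hc_inv, ?_,
    fun k _ => setVal_perturb hε.le (typeVal_perturb hε hc0.le k),
    buyManyRevenueAtLeast_typeVal hn hε hc0.le fun k _ => one_le_truncGeom_inv_mul_pow hc k,
    optRevenue_const_eq_of_tail_mul_eq hn (truncGeom_nonneg (by positivity) hc_inv) htail
      (fun k hk => by gcongr; exacts [hc.le, (mem_Icc.mp hk).1]) (by positivity)⟩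
  rw [sum_Icc_truncGeom hc_inv.ne hn, pow_one, hgeom, hc_def]
  field_simp
  exact hδ1.le

/-- For any `ε > 0` with `εn > 1` and `δ ∈ (0,1)`, there is a unit-demand value
distribution `D` over `n` items (types `k = 1, ..., n` with probabilities `prob k`, the
remaining mass on the zero valuation) and a `(1 ± ε)`-multiplicative perturbation `D'` of
`D`, such that the optimal buy-many revenue on `D` is at least `n` (witnessed by a menu and
utility-maximizing multi-purchase behavior), while the optimal unconstrained (IC and IR)
revenue on `D'` equals `(1+δ)/ε`. -/
theorem stmt_9 (n : ℕ) (hn : 1 ≤ n) (ε δ : ℝ) (hδ : δ ∈ Set.Ioo (0 : ℝ) 1)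
    (hε : 0 < ε) (hεn : 1 < ε * n) :
    ∃ (vals vals' : ℕ → Fin n → ℝ) (prob : ℕ → ℝ),
      (∀ k, 0 ≤ prob k) ∧ (∑ k ∈ Finset.Icc 1 n, prob k ≤ 1) ∧
      -- D' is a (1±ε)-multiplicative perturbation of D (under the identity coupling)
      (∀ k ∈ Finset.Icc 1 n, ∀ S : Finset (Fin n),
        (1 - ε) * setVal (vals k) S ≤ setVal (vals' k) S ∧
        setVal (vals' k) S ≤ (1 + ε) * setVal (vals k) S) ∧
      -- the optimal buy-many revenue for D is at least n
      (∃ (M : Set (Lottery n)) (σ : ℕ → List (Lottery n)),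
        (∀ ℓ ∈ M, IsLottery ℓ) ∧
        (∀ k ∈ Finset.Icc 1 n, ∀ ℓ ∈ σ k, ℓ ∈ M) ∧
        (∀ k ∈ Finset.Icc 1 n, ∀ L : List (Lottery n), (∀ ℓ ∈ L, ℓ ∈ M) →
          listUtility (vals k) L ≤ listUtility (vals k) (σ k)) ∧
        (∀ k ∈ Finset.Icc 1 n, 0 ≤ listUtility (vals k) (σ k)) ∧
        (n : ℝ) ≤ ∑ k ∈ Finset.Icc 1 n, prob k * listPrice (σ k)) ∧
      -- the optimal (unconstrained, IC-IR) revenue for D' equals (1+δ)/ε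
      sSup {r : ℝ | ∃ (x : ℕ → Finset (Fin n) → ℝ) (p : ℕ → ℝ),
          (∀ k, IsLottery (x k, p k)) ∧
          (∀ k ∈ Finset.Icc 1 n, ∀ k' ∈ Finset.Icc 1 n,
            (∑ S : Finset (Fin n), x k' S * setVal (vals' k) S) - p k' ≤
            (∑ S : Finset (Fin n), x k S * setVal (vals' k) S) - p k) ∧
          (∀ k ∈ Finset.Icc 1 n,
            0 ≤ (∑ S : Finset (Fin n), x k S * setVal (vals' k) S) - p k) ∧
          r = ∑ k ∈ Finset.Icc 1 n, prob k * p k}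
        = (1 + δ) / ε :=
  stmt_9_general n hn ε δ hδ hε
end

section
/- In the construction of the previous statement, since the buyer's valuation is subadditive and every lottery (x_j, p_j) with j ≠ i yields strictly negative utility to a type-i buyer, every adaptive buy-many strategy of the type-i buyer that ever purchases a lottery other than (x_i, p_i) is strictly dominated, and the optimal strategy purchases exactly one copy of (x_i, p_i). Consequently, if each type i occurs with probability 1/N, the buy-many revenue of this menu equals (1/(2N))·Σ_{i=1}^N t_i. -/
/-!
A unit-demand value is subadditive: by the union bound, the chance that some purchased lottery
hits `S i` is at most the sum of the individual chances, so the utility of a bundle is at most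
the sum of the standalone utilities of its lotteries. A foreign lottery `j` has standalone
utility at most `t i * q / s - t j / 2 ≤ 1/3 - 1/2 < 0`, so bundles avoiding the own lottery have
nonpositive utility. A bundle containing the own lottery already gets the full value `t i`, and
every further purchase only adds a positive price.
-/

/-- Utility of a type-`i` unit-demand buyer (value `t i` for any item of `S i`) purchasing
the list `L` of menu entries, where entry `j` allocates a uniformly random item of `S j`
(a set of size `s = √n`) at price `t j / 2`: the buyer gets value `t i` iff some purchased
item lies in `S i`, which by independence fails with probability
`Π_{j ∈ L} (1 - |S i ∩ S j|/s)`. -/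
noncomputable def buyManyUtility (n s N : ℕ) (S : Fin N → Finset (Fin n))
    (t : Fin N → ℝ) (i : Fin N) (L : List (Fin N)) : ℝ :=
  t i * (1 - (L.map (fun j => 1 - ((S i ∩ S j).card : ℝ) / (s : ℝ))).prod)
    - (L.map (fun j => t j / 2)).sum

theorem List.one_sub_prod_map_one_sub_le_sum_map {ι R : Type*} [CommRing R] [PartialOrder R]
    [IsOrderedRing R] (f : ι → R) {L : List ι} (h0 : ∀ j ∈ L, 0 ≤ f j) (h1 : ∀ j ∈ L, f j ≤ 1) :
    1 - (L.map fun j => 1 - f j).prod ≤ (L.map f).sum := by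
  induction L with
  | nil => simp
  | cons a L ih =>
    simp only [List.mem_cons, forall_eq_or_imp] at h0 h1
    have hP : (L.map fun j => 1 - f j).prod ≤ 1 := by
      simpa using List.prod_map_le_prod_map₀ (fun j => 1 - f j) (fun _ => 1)
        (fun j hj => sub_nonneg.2 (h1.2 j hj)) (fun j hj => sub_le_self 1 (h0.2 j hj))
    have haP : f a * (L.map fun j => 1 - f j).prod ≤ f a := mul_le_of_le_one_right h0.1 hP
    simp only [List.map_cons, List.prod_cons, List.sum_cons]
    linear_combination haP + ih h0.2 h1.2

theorem List.sum_map_sub {ι G : Type*} [AddCommGroup G] (f g : ι → G) (L : List ι) :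
    (L.map fun j => f j - g j).sum = (L.map f).sum - (L.map g).sum := by
  induction L <;> simp [*, sub_add_sub_comm]

section BuyMany

variable {n s N : ℕ} {S : Fin N → Finset (Fin n)} {t : Fin N → ℝ} {i : Fin N}

theorem buyManyUtility_singleton (j : Fin N) :
    buyManyUtility n s N S t i [j] = t i * ((S i ∩ S j).card / s) - t j / 2 := by
  simp [buyManyUtility]

theorem buyManyUtility_singleton_self (hS : (S i).card = s) (hs : s ≠ 0) :
    buyManyUtility n s N S t i [i] = t i / 2 := by
  rw [buyManyUtility_singleton, Finset.inter_self, hS, div_self (Nat.cast_ne_zero.2 hs)]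
  ring

theorem buyManyUtility_of_mem {L : List (Fin N)} (hS : (S i).card = s) (hs : s ≠ 0)
    (hi : i ∈ L) :
    buyManyUtility n s N S t i L = t i / 2 - ((L.erase i).map fun j => t j / 2).sum := by
  have hprod : (L.map fun j => 1 - ((S i ∩ S j).card : ℝ) / s).prod = 0 := by
    rw [← List.prod_map_erase _ hi, Finset.inter_self, hS, div_self (Nat.cast_ne_zero.2 hs),
      sub_self, zero_mul]
  rw [buyManyUtility, hprod, ← List.sum_map_erase _ hi]
  ring

theorem buyManyUtility_le_sum_map_singleton {L : List (Fin N)} (hti : 0 ≤ t i)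
    (hS : ∀ j ∈ L, (S j).card ≤ s) :
    buyManyUtility n s N S t i L ≤ (L.map fun j => buyManyUtility n s N S t i [j]).sum := by
  set f : Fin N → ℝ := fun j => (S i ∩ S j).card / s
  have hf1 : ∀ j ∈ L, f j ≤ 1 := fun j hj => div_le_one_of_le₀
    (by exact_mod_cast (Finset.card_le_card Finset.inter_subset_right).trans (hS j hj))
    (Nat.cast_nonneg s)
  have hunion := List.one_sub_prod_map_one_sub_le_sum_map f (fun j _ => by positivity) hf1
  simp only [buyManyUtility_singleton]
  rw [List.sum_map_sub, List.sum_map_mul_left, buyManyUtility]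
  gcongr

theorem buyManyUtility_nonpos {L : List (Fin N)} (hti : 0 ≤ t i) (hS : ∀ j ∈ L, (S j).card ≤ s)
    (hL : ∀ j ∈ L, buyManyUtility n s N S t i [j] ≤ 0) :
    buyManyUtility n s N S t i L ≤ 0 :=
  (buyManyUtility_le_sum_map_singleton hti hS).trans (by simpa using List.sum_le_sum hL)

theorem buyManyUtility_singleton_neg {q : ℕ} {j : Fin N} (hq : q * q = s) (hq0 : 0 < q)
    (hij : (S i ∩ S j).card ≤ q) (htq : t i ≤ q / 3) (htj : 1 ≤ t j) :
    buyManyUtility n s N S t i [j] < 0 := by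
  have hqR : (0 : ℝ) < q := by exact_mod_cast hq0
  have hfrac : ((S i ∩ S j).card : ℝ) / s ≤ 1 / q := by
    rw [← hq, Nat.cast_mul, div_le_div_iff₀ (by positivity) hqR]
    have : ((S i ∩ S j).card : ℝ) ≤ q := by exact_mod_cast hij
    nlinarith
  have hvalue : t i * ((S i ∩ S j).card / s) ≤ 1 / 3 :=
    calc t i * ((S i ∩ S j).card / s) ≤ q / 3 * (1 / q) :=
          mul_le_mul htq hfrac (by positivity) (by positivity)
      _ = 1 / 3 := by field_simp
  rw [buyManyUtility_singleton]
  linarith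

end BuyMany

theorem stmt_13_general (n s q N : ℕ) (hq : q * q = s) (hq1 : 1 ≤ q)
    (S : Fin N → Finset (Fin n)) (hcard : ∀ i, (S i).card = s)
    (hint : ∀ i j, i ≠ j → (S i ∩ S j).card ≤ q)
    (t : Fin N → ℝ) (ht : ∀ i, t i ∈ Set.Icc (1 : ℝ) ((q : ℝ) / 3)) :
    (∀ i : Fin N, ∀ L : List (Fin N),
        buyManyUtility n s N S t i L ≤ buyManyUtility n s N S t i [i]) ∧
    (∀ i : Fin N, ∀ L : List (Fin N), (∃ j ∈ L, j ≠ i) →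
        buyManyUtility n s N S t i L < buyManyUtility n s N S t i [i]) ∧
    (1 / (N : ℝ)) * ∑ i, t i / 2 = (1 / (2 * (N : ℝ))) * ∑ i, t i := by
  have hs0 : s ≠ 0 := by rw [← hq]; positivity
  have hprice : ∀ L : List (Fin N), ∀ x ∈ L.map fun j => t j / 2, 0 < x := by
    simp only [List.mem_map]
    rintro L _ ⟨j, -, rfl⟩
    linarith [(ht j).1]
  have key : ∀ i L, buyManyUtility n s N S t i L ≤ t i / 2 ∧
      ((∃ j ∈ L, j ≠ i) → buyManyUtility n s N S t i L < t i / 2) := by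
    intro i L
    by_cases hi : i ∈ L
    · rw [buyManyUtility_of_mem (hcard i) hs0 hi]
      refine ⟨sub_le_self _ (List.sum_nonneg fun x hx => (hprice _ x hx).le), ?_⟩
      rintro ⟨j, hj, hji⟩
      exact sub_lt_self _ <| List.sum_pos _ (hprice _) <|
        List.ne_nil_of_mem (List.mem_map_of_mem ((List.mem_erase_of_ne hji).2 hj))
    · have hlt : buyManyUtility n s N S t i L < t i / 2 :=
        (buyManyUtility_nonpos (by linarith [(ht i).1]) (fun j _ => (hcard j).le) fun j hj =>
          (buyManyUtility_singleton_neg hq hq1 (hint i j (by rintro rfl; exact hi hj)) (ht i).2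
            (ht j).1).le).trans_lt (by linarith [(ht i).1])
      exact ⟨hlt.le, fun _ => hlt⟩
  simp only [buyManyUtility_singleton_self (hcard _) hs0]
  refine ⟨fun i L => (key i L).1, fun i L => (key i L).2, ?_⟩
  rw [← Finset.sum_div]
  ring

/-- In the unit-demand lower-bound construction, since the valuation is subadditive and
every foreign lottery yields strictly negative utility, every multi-purchase strategy is
(weakly) dominated by buying a single copy of the own entry `(x_i, p_i)`, strictly so if it
ever buys a foreign entry; consequently, with each type having probability `1/N`, the
buy-many revenue of the menu equals `(1/(2N)) Σ_i t_i`. -/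
theorem stmt_13 (n s q N : ℕ) (hq : q * q = s) (hs : s * s = n) (hq1 : 1 ≤ q)
    (hN : 0 < N)
    (S : Fin N → Finset (Fin n)) (hcard : ∀ i, (S i).card = s)
    (hint : ∀ i j, i ≠ j → (S i ∩ S j).card ≤ q)
    (t : Fin N → ℝ) (ht : ∀ i, t i ∈ Set.Icc (1 : ℝ) ((q : ℝ) / 3)) :
    (∀ i : Fin N, ∀ L : List (Fin N),
        buyManyUtility n s N S t i L ≤ buyManyUtility n s N S t i [i]) ∧
    (∀ i : Fin N, ∀ L : List (Fin N), (∃ j ∈ L, j ≠ i) →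
        buyManyUtility n s N S t i L < buyManyUtility n s N S t i [i]) ∧
    (1 / (N : ℝ)) * ∑ i, t i / 2 = (1 / (2 * (N : ℝ))) * ∑ i, t i :=
  stmt_13_general n s q N hq hq1 S hcard hint t ht
end

section
/- Fix δ ∈ (0,1) and α = √δ. Suppose real numbers satisfy: (1) x'·v − p' ≥ x·v − p, and (2) x·v − (1−α)p ≥ x'·v − (1+δ)(1−α)p', with p, p' ≥ 0. Then p ≥ (1 + δ − δ/α)·p' = (1 + δ − √δ)·p', and consequently (1−α)p ≥ (1 − 2√δ)·p'. -/
/-!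
Adding the two incentive constraints cancels the values and leaves `α p ≥ (α + αδ - δ) p'`,
i.e. `p ≥ (1 + δ - δ/α) p'`. For `α = √δ` this factor is `1 + δ - √δ`, and discounting by `1 - α`
costs at most `2√δ` since `(1 - α)(1 + δ - α) = 1 - 2α + α² + δ(1 - α)`.
-/

theorem le_payment_of_incentive_constraints {α δ xv x'v p p' : ℝ} (hα : 0 < α)
    (h1 : x'v - p' ≥ xv - p)
    (h2 : xv - (1 - α) * p ≥ x'v - (1 + δ) * (1 - α) * p') :
    (1 + δ - δ / α) * p' ≤ p := by
  have hsum : (α + α * δ - δ) * p' ≤ α * p := by linear_combination h1 + h2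
  calc (1 + δ - δ / α) * p' = (α + α * δ - δ) * p' / α := by field_simp
    _ ≤ p := (div_le_iff₀' hα).2 hsum

theorem one_sub_two_mul_le_one_sub_mul {α δ : ℝ} (hδ : 0 ≤ δ) (hα : α ≤ 1) :
    1 - 2 * α ≤ (1 - α) * (1 + δ - α) := by
  nlinarith [mul_nonneg hδ (sub_nonneg.2 hα), sq_nonneg α]

theorem stmt_15_general (δ xv x'v p p' : ℝ) (hδ : δ ∈ Set.Ioo (0 : ℝ) 1)
    (h1 : x'v - p' ≥ xv - p)
    (h2 : xv - (1 - Real.sqrt δ) * p ≥ x'v - (1 + δ) * (1 - Real.sqrt δ) * p')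
    (hp' : 0 ≤ p') :
    p ≥ (1 + δ - δ / Real.sqrt δ) * p' ∧
    (1 + δ - δ / Real.sqrt δ) * p' = (1 + δ - Real.sqrt δ) * p' ∧
    (1 - Real.sqrt δ) * p ≥ (1 - 2 * Real.sqrt δ) * p' := by
  obtain ⟨hδ0, hδ1⟩ := hδ
  have hα1 : √δ ≤ 1 := Real.sqrt_le_one.2 hδ1.le
  have hpay := le_payment_of_incentive_constraints (Real.sqrt_pos.2 hδ0) h1 h2
  rw [Real.div_sqrt] at hpay ⊢
  refine ⟨hpay, rfl, ?_⟩
  calc (1 - 2 * √δ) * p' ≤ (1 - √δ) * (1 + δ - √δ) * p' :=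
        mul_le_mul_of_nonneg_right (one_sub_two_mul_le_one_sub_mul hδ0.le hα1) hp'
    _ = (1 - √δ) * ((1 + δ - √δ) * p') := mul_assoc _ _ _
    _ ≤ (1 - √δ) * p := mul_le_mul_of_nonneg_left hpay (sub_nonneg.2 hα1)

/-- Arithmetic core of the discretization step: with `α = √δ`, from
`x'·v - p' ≥ x·v - p` and `x·v - (1-α)p ≥ x'·v - (1+δ)(1-α)p'` one gets
`p ≥ (1 + δ - δ/α)p' = (1 + δ - √δ)p'`, hence `(1-α)p ≥ (1 - 2√δ)p'`. -/
theorem stmt_15 (δ xv x'v p p' : ℝ) (hδ : δ ∈ Set.Ioo (0 : ℝ) 1)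
    (h1 : x'v - p' ≥ xv - p)
    (h2 : xv - (1 - Real.sqrt δ) * p ≥ x'v - (1 + δ) * (1 - Real.sqrt δ) * p')
    (hp : 0 ≤ p) (hp' : 0 ≤ p') :
    p ≥ (1 + δ - δ / Real.sqrt δ) * p' ∧
    (1 + δ - δ / Real.sqrt δ) * p' = (1 + δ - Real.sqrt δ) * p' ∧
    (1 - Real.sqrt δ) * p ≥ (1 - 2 * Real.sqrt δ) * p' :=
  stmt_15_general δ xv x'v p p' hδ h1 h2 hp'
end
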